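/- arXiv:1707.07589 — 5 statements merged into one kernel-verified Lean document; each statement's English description precedes it below -/
import Mathlib

section
/- Let p ≥ 1 and γ ∈ (0,1). Define φ(x) = ((1+x)^p − (1+γ)^(p-1))·x^(−p) for x > 0. Then φ attains its maximum over (0,∞) at x = γ, and max φ = ((1+γ)/γ)^(p-1). -/
theorem phi_max_at_gamma (p γ : ℝ) (hp : 1 ≤ p) (hγ : γ ∈ Set.Ioo (0 : ℝ) 1) :
    (∀ x : ℝ, 0 < x →
      ((1 + x) ^ p - (1 + γ) ^ (p - 1)) / x ^ p ≤
        ((1 + γ) ^ p - (1 + γ) ^ (p - 1)) / γ ^ p) ∧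
    ((1 + γ) ^ p - (1 + γ) ^ (p - 1)) / γ ^ p = ((1 + γ) / γ) ^ (p - 1) := by
  obtain ⟨hγ0, hγ1⟩ := hγ
  have h1γ : (0:ℝ) < 1 + γ := by linarith
  have hval : ((1 + γ) ^ p - (1 + γ) ^ (p - 1)) / γ ^ p = ((1 + γ) / γ) ^ (p - 1) := by
    have h1 : (1 + γ) ^ p = (1 + γ) ^ (p - 1) * (1 + γ) := by
      rw [← Real.rpow_add_one h1γ.ne']; ring_nf
    have h2 : γ ^ p = γ ^ (p - 1) * γ := by
      rw [← Real.rpow_add_one hγ0.ne']; ring_nf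
    rw [h1, h2, Real.div_rpow h1γ.le hγ0.le]
    field_simp
    ring
  refine ⟨fun x hx => ?_, hval⟩
  rw [hval]
  have hxp : (0:ℝ) < x ^ p := Real.rpow_pos_of_pos hx p
  rw [div_le_iff₀ hxp, sub_le_iff_le_add]
  -- key: (1+x)^p ≤ ((1+γ)/γ)^(p-1) * x^p + (1+γ)^(p-1)
  have hconv := (convexOn_rpow hp).2
    (Set.mem_Ici.mpr h1γ.le : (1 + γ) ∈ Set.Ici (0:ℝ))
    (Set.mem_Ici.mpr (show (0:ℝ) ≤ x * (1 + γ) / γ by positivity))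
    (show (0:ℝ) ≤ 1/(1+γ) by positivity)
    (show (0:ℝ) ≤ γ/(1+γ) by positivity)
    (show 1/(1+γ) + γ/(1+γ) = 1 by field_simp)
  have harg : (1/(1+γ)) • (1 + γ) + (γ/(1+γ)) • (x * (1 + γ) / γ) = 1 + x := by
    simp only [smul_eq_mul]; field_simp
  rw [harg] at hconv
  simp only [smul_eq_mul] at hconv
  refine hconv.trans (le_of_eq ?_)
  have e1 : 1/(1+γ) * (1+γ) ^ p = (1+γ) ^ (p-1) := by
    rw [Real.rpow_sub h1γ, Real.rpow_one]; ring
  have e2 : γ/(1+γ) * (x * (1 + γ) / γ) ^ p = ((1 + γ) / γ) ^ (p - 1) * x ^ p := by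
    have : x * (1 + γ) / γ = x * ((1 + γ) / γ) := by ring
    rw [this, Real.mul_rpow hx.le (by positivity),
      Real.div_rpow h1γ.le hγ0.le, Real.div_rpow h1γ.le hγ0.le,
      Real.rpow_sub h1γ, Real.rpow_sub hγ0, Real.rpow_one, Real.rpow_one]
    field_simp
  rw [e1, e2]
  ring
end

section
/- Let p ≥ 1 and ε ∈ (0,1). Define Φ(x) = ((1−ε)^(p-1) − (1−x)^p)·x^(−p) for x > 0. Then Φ(x) ≤ Φ(ε) = ((1−ε)/ε)^(p-1) for all x > 0. -/
open Finset in
private lemma real_rpow_am2 (w₁ w₂ z₁ z₂ : ℝ) (hw₁ : 0 ≤ w₁) (hw₂ : 0 ≤ w₂)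
    (hz₁ : 0 ≤ z₁) (hz₂ : 0 ≤ z₂) (hw' : w₁ + w₂ = 1) {p : ℝ} (hp : 1 ≤ p) :
    (w₁ * z₁ + w₂ * z₂) ^ p ≤ w₁ * z₁ ^ p + w₂ * z₂ ^ p := by
  have h := Real.rpow_arith_mean_le_arith_mean_rpow univ ![w₁, w₂] ![z₁, z₂] ?_ ?_ ?_ hp
  · simpa [Fin.sum_univ_succ] using h
  · intro i _; fin_cases i <;> simpa
  · simpa [Fin.sum_univ_succ] using hw'
  · intro i _; fin_cases i <;> simpa

theorem Phi_max_at_epsilon (p ε : ℝ) (hp : 1 ≤ p) (hε : ε ∈ Set.Ioo (0 : ℝ) 1) :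
    (∀ x : ℝ, x ∈ Set.Ioc (0 : ℝ) 1 →
      ((1 - ε) ^ (p - 1) - (1 - x) ^ p) / x ^ p ≤
        ((1 - ε) ^ (p - 1) - (1 - ε) ^ p) / ε ^ p) ∧
    ((1 - ε) ^ (p - 1) - (1 - ε) ^ p) / ε ^ p = ((1 - ε) / ε) ^ (p - 1) := by
  obtain ⟨hε0, hε1⟩ := hε
  have h1ε : (0:ℝ) < 1 - ε := by linarith
  have heq : ((1 - ε) ^ (p - 1) - (1 - ε) ^ p) / ε ^ p = ((1 - ε) / ε) ^ (p - 1) := by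
    rw [Real.div_rpow h1ε.le hε0.le]
    rw [show p = (p - 1) + 1 by ring, Real.rpow_add h1ε, Real.rpow_add hε0,
      Real.rpow_one]
    field_simp
    simp only [Real.rpow_one]
    ring
  refine ⟨fun x hx => ?_, heq⟩
  obtain ⟨hx0, hx1⟩ := hx
  have h1x : (0:ℝ) ≤ 1 - x := by linarith
  -- key inequality
  have key := real_rpow_am2 (1 - ε) ε ((1 - x) / (1 - ε)) (x / ε) h1ε.le hε0.le
    (div_nonneg h1x h1ε.le) (div_nonneg hx0.le hε0.le) (by ring) hp
  have hsum : (1 - ε) * ((1 - x) / (1 - ε)) + ε * (x / ε) = 1 := by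
    field_simp
    ring
  rw [hsum, Real.one_rpow, Real.div_rpow h1x h1ε.le, Real.div_rpow hx0.le hε0.le] at key
  -- rewrite powers: (1-ε)^p = (1-ε)^(p-1) * (1-ε), ε^p = ε^(p-1) * ε
  have hεp : ε ^ p = ε ^ (p - 1) * ε := by
    rw [← Real.rpow_add_one hε0.ne' (p - 1)]; norm_num
  have h1εp : (1 - ε) ^ p = (1 - ε) ^ (p - 1) * (1 - ε) := by
    rw [← Real.rpow_add_one h1ε.ne' (p - 1)]; norm_num
  have hεp1pos : (0:ℝ) < ε ^ (p - 1) := Real.rpow_pos_of_pos hε0 _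
  have h1εp1pos : (0:ℝ) < (1 - ε) ^ (p - 1) := Real.rpow_pos_of_pos h1ε _
  have hxp : (0:ℝ) < x ^ p := Real.rpow_pos_of_pos hx0 _
  have hεpp : (0:ℝ) < ε ^ p := Real.rpow_pos_of_pos hε0 _
  -- key becomes: 1 ≤ (1-x)^p / (1-ε)^(p-1) + x^p / ε^(p-1)
  rw [hεp, h1εp] at key
  rw [heq]
  rw [div_le_iff₀ hxp]
  have key2 : (1 - ε) ^ (p - 1) ≤ (1 - x) ^ p + x ^ p * ((1 - ε) ^ (p - 1) / ε ^ (p - 1)) := by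
    have := mul_le_mul_of_nonneg_left key h1εp1pos.le
    calc (1 - ε) ^ (p - 1) = (1 - ε) ^ (p - 1) * 1 := by ring
    _ ≤ (1 - ε) ^ (p - 1) * ((1 - ε) * ((1 - x) ^ p / ((1 - ε) ^ (p - 1) * (1 - ε))) +
        ε * (x ^ p / (ε ^ (p - 1) * ε))) := this
    _ = (1 - x) ^ p + x ^ p * ((1 - ε) ^ (p - 1) / ε ^ (p - 1)) := by
        field_simp
  rw [Real.div_rpow h1ε.le hε0.le]
  linarith
end

section
/- For every real p ≥ 1, the supremum over ε ∈ (0,1) of the function φ(ε) = (1−ε)^(p−1) · (1 + ((1−ε)/ε)^(p−1))^(−1) is attained at ε = 1/2 and equals 2^(−p). -/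
theorem sup_phi_eq_two_pow_neg_p (p : ℝ) (hp : 1 ≤ p) :
    (1 - (1/2 : ℝ)) ^ (p - 1) / (1 + ((1 - (1/2 : ℝ)) / (1/2 : ℝ)) ^ (p - 1))
      = (2 : ℝ) ^ (-p) ∧
    ∀ ε : ℝ, ε ∈ Set.Ioo (0 : ℝ) 1 →
      (1 - ε) ^ (p - 1) / (1 + ((1 - ε) / ε) ^ (p - 1)) ≤ (2 : ℝ) ^ (-p) := by
  constructor
  · have h1 : ((1:ℝ) - 1/2) / (1/2) = 1 := by norm_num
    have h2 : ((1:ℝ) - 1/2) = 2⁻¹ := by norm_num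
    rw [h1, Real.one_rpow, h2, Real.inv_rpow (by norm_num), ← Real.rpow_neg (by norm_num),
      show -p = (-(p-1)) + (-1) by ring, Real.rpow_add two_pos, Real.rpow_neg_one]
    ring
  · intro ε ⟨hε0, hε1⟩
    set q := p - 1 with hq
    have hqnn : 0 ≤ q := by simp [hq]; linarith
    have ha : (0:ℝ) < ε := hε0
    have hb : (0:ℝ) < 1 - ε := by linarith
    have hdiv : ((1 - ε) / ε) ^ q = (1-ε)^q / ε^q :=
      Real.div_rpow hb.le ha.le q
    have haq : (0:ℝ) < ε ^ q := Real.rpow_pos_of_pos ha q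
    have hbq : (0:ℝ) < (1-ε) ^ q := Real.rpow_pos_of_pos hb q
    rw [hdiv]
    have hden : (0:ℝ) < 1 + (1-ε)^q / ε^q := by positivity
    rw [div_le_iff₀ hden]
    -- key quantities
    have hab : (0:ℝ) < ε * (1-ε) := mul_pos ha hb
    have habq : (ε * (1-ε)) ^ (q/2) * (ε * (1-ε)) ^ (q/2) = ε^q * (1-ε)^q := by
      rw [← Real.rpow_add hab, ← Real.mul_rpow ha.le hb.le]
      norm_num
    have hsq : ε^q + (1-ε)^q ≥ 2 * (ε * (1-ε)) ^ (q/2) := by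
      have hx : ε^(q/2) * ε^(q/2) = ε^q := by
        rw [← Real.rpow_add ha]; norm_num
      have hy : (1-ε)^(q/2) * (1-ε)^(q/2) = (1-ε)^q := by
        rw [← Real.rpow_add hb]; norm_num
      have hxy : (ε * (1-ε)) ^ (q/2) = ε^(q/2) * (1-ε)^(q/2) :=
        Real.mul_rpow ha.le hb.le
      nlinarith [sq_nonneg (ε^(q/2) - (1-ε)^(q/2))]
    have hquarter : (ε * (1-ε)) ^ (q/2) ≤ (2:ℝ) ^ (-q) := by
      have h14 : ε * (1-ε) ≤ 1/4 := by nlinarith [sq_nonneg (ε - 1/2)]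
      calc (ε * (1-ε)) ^ (q/2) ≤ ((1:ℝ)/4) ^ (q/2) :=
            Real.rpow_le_rpow hab.le h14 (by positivity)
        _ = (2:ℝ) ^ (-q) := by
            rw [show (1:ℝ)/4 = (2:ℝ)^(-2:ℝ) by norm_num [Real.rpow_neg, Real.rpow_two],
              ← Real.rpow_mul (by norm_num)]
            ring_nf
    have hkey : ε^q * (1-ε)^q ≤ (2:ℝ)^(-p) * (ε^q + (1-ε)^q) := by
      have h2p : (2:ℝ)^(-q) = (2:ℝ)^(-p) * 2 := by
        rw [show -q = -p + 1 by simp [hq]; ring, Real.rpow_add two_pos]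
        norm_num
      have hgeo : (0:ℝ) ≤ (ε * (1-ε)) ^ (q/2) := (Real.rpow_pos_of_pos hab _).le
      have h2pos : (0:ℝ) < (2:ℝ)^(-p) := Real.rpow_pos_of_pos two_pos _
      calc ε^q * (1-ε)^q = (ε * (1-ε)) ^ (q/2) * (ε * (1-ε)) ^ (q/2) := habq.symm
        _ ≤ (2:ℝ)^(-q) * (ε * (1-ε)) ^ (q/2) := by
            exact mul_le_mul_of_nonneg_right hquarter hgeo
        _ = (2:ℝ)^(-p) * (2 * (ε * (1-ε)) ^ (q/2)) := by rw [h2p]; ring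
        _ ≤ (2:ℝ)^(-p) * (ε^q + (1-ε)^q) :=
            mul_le_mul_of_nonneg_left hsq h2pos.le
    rw [show (1:ℝ) + (1-ε)^q/ε^q = (ε^q + (1-ε)^q)/ε^q by field_simp,
      ← mul_div_assoc, le_div_iff₀ haq]
    calc (1-ε)^q * ε^q = ε^q * (1-ε)^q := mul_comm _ _
      _ ≤ (2:ℝ)^(-p) * (ε^q + (1-ε)^q) := hkey
end

section
/- Let (d_k), (R_k), θ, q, α₀, R†, C, δ, p, τ̃ be as follows: 0 < q < θ < 1, α₀, R†, C, δ > 0, p ≥ 1, τ̃ > C/(1−q), and suppose for all k ≥ 1: d_k + α₀ θ^{k−1} R_k < θ^k (d_0 + (α₀/(θ−q)) R†) + (C/(1−q)) δ^p, and moreover θ^k (d_0 + (α₀/(θ−q)) R†) ≥ (τ̃ − C/(1−q)) δ^p (i.e., k is at most the stopping index). Then R_k ≤ θ (d_0/α₀ + R†/(θ−q)) · (1 + (C/(1−q)) (τ̃ − C/(1−q))^(−1)). -/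
theorem regularization_functional_uniform_bound (d R : ℕ → ℝ)
    (θ q α₀ Rdag C δ p τ : ℝ) (k : ℕ)
    (hd : ∀ j, 0 ≤ d j) (hR : ∀ j, 0 ≤ R j)
    (hq : 0 < q) (hqθ : q < θ) (hθ : θ < 1)
    (hα₀ : 0 < α₀) (hRdag : 0 < Rdag) (hC : 0 < C) (hδ : 0 < δ) (hp : 1 ≤ p)
    (hτ : C / (1 - q) < τ) (hk : 1 ≤ k)
    (h1 : d k + α₀ * θ ^ (k - 1) * R k <
        θ ^ k * (d 0 + (α₀ / (θ - q)) * Rdag) + (C / (1 - q)) * δ ^ p)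
    (h2 : (τ - C / (1 - q)) * δ ^ p ≤ θ ^ k * (d 0 + (α₀ / (θ - q)) * Rdag)) :
    R k ≤ θ * (d 0 / α₀ + Rdag / (θ - q)) *
        (1 + (C / (1 - q)) * (τ - C / (1 - q))⁻¹) := by
  have hθ0 : 0 < θ := hq.trans hqθ
  have hpow : 0 < θ ^ (k - 1) := pow_pos hθ0 _
  set S := d 0 + (α₀ / (θ - q)) * Rdag with hS
  set B := C / (1 - q) with hB
  clear_value S B
  have hT : 0 < τ - B := by linarith
  have hB0 : 0 < B := by
    rw [hB]; exact div_pos hC (by linarith)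
  have hθq : 0 < θ - q := by linarith
  have hkpow : θ ^ k = θ ^ (k - 1) * θ := by
    rw [← pow_succ, Nat.sub_add_cancel hk]
  have h3 : α₀ * θ ^ (k - 1) * R k ≤ θ ^ k * S + B * δ ^ p := by
    have := hd k; linarith
  have h4 : δ ^ p ≤ θ ^ k * S / (τ - B) := by
    rw [le_div_iff₀ hT]; linarith
  have h5 : α₀ * θ ^ (k - 1) * R k ≤ θ ^ k * S * (1 + B / (τ - B)) := by
    have h6 : B * δ ^ p ≤ B * (θ ^ k * S / (τ - B)) :=
      mul_le_mul_of_nonneg_left h4 hB0.le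
    calc α₀ * θ ^ (k - 1) * R k ≤ θ ^ k * S + B * (θ ^ k * S / (τ - B)) := by linarith
      _ = θ ^ k * S * (1 + B / (τ - B)) := by ring
  have hdenom : 0 < α₀ * θ ^ (k - 1) := mul_pos hα₀ hpow
  have h8 : R k ≤ θ ^ k * S * (1 + B / (τ - B)) / (α₀ * θ ^ (k - 1)) := by
    rw [le_div_iff₀ hdenom]; linarith
  have h9 : θ ^ k * S * (1 + B / (τ - B)) / (α₀ * θ ^ (k - 1)) =
      θ * (d 0 / α₀ + Rdag / (θ - q)) * (1 + B * (τ - B)⁻¹) := by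
    rw [hkpow, hS]
    field_simp
  rw [h9] at h8
  exact h8
end

section
/- Let p ≥ 1 and c ∈ (0, 1/3). Then the condition (c/(1−c))^p < sup_{ε,γ ∈ (0,1)} (1−ε)^{p−1} ((1+γ)^{p−1} + ((1−ε)/ε)^{p−1})^{−1} holds, since the supremum equals 2^{−p}, i.e., (c/(1−c))^p < 2^{−p} is equivalent to c < 1/3. -/
open Real Filter

private lemma aux_pow_half : ∀ q : ℝ, 0 ≤ q → ((1:ℝ)/4) ^ (q/2) = (2:ℝ) ^ (-q) := by
  intro q hq
  have h4 : ((1:ℝ)/4) = (2:ℝ) ^ (-(2:ℝ)) := by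
    rw [Real.rpow_neg (by norm_num), show ((2:ℝ):ℝ) = ((2:ℕ):ℝ) by norm_num,
      Real.rpow_natCast]
    norm_num
  rw [h4, ← Real.rpow_mul (by norm_num)]
  ring_nf

private lemma aux_ub (p : ℝ) (hp : 1 ≤ p) (ε γ : ℝ) (hε0 : 0 < ε) (hε1 : ε < 1)
    (hγ0 : 0 ≤ γ) :
    (1 - ε) ^ (p - 1) * ((1 + γ) ^ (p - 1) + ((1 - ε) / ε) ^ (p - 1))⁻¹ ≤ (2:ℝ) ^ (-p) := by
  have hq : (0:ℝ) ≤ p - 1 := by linarith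
  set q := p - 1 with hqdef
  have ha : (0:ℝ) < 1 - ε := by linarith
  set x := (1 - ε) ^ (q/2) with hxdef
  set y := ε ^ (q/2) with hydef
  have hx : 0 < x := Real.rpow_pos_of_pos ha _
  have hy : 0 < y := Real.rpow_pos_of_pos hε0 _
  have hxx : (1 - ε) ^ q = x * x := by
    rw [hxdef, ← Real.rpow_add ha]; ring_nf
  have hyy : ε ^ q = y * y := by
    rw [hydef, ← Real.rpow_add hε0]; ring_nf
  have hdiv : ((1 - ε) / ε) ^ q = (x * x) / (y * y) := by
    rw [Real.div_rpow ha.le hε0.le, hxx, hyy]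
  have h1 : (1:ℝ) ≤ (1 + γ) ^ q := Real.one_le_rpow (by linarith) hq
  have hxy : x * y ≤ (2:ℝ) ^ (-q) := by
    have hmul : x * y = ((1 - ε) * ε) ^ (q/2) := (Real.mul_rpow ha.le hε0.le).symm
    have hle : (1 - ε) * ε ≤ 1/4 := by nlinarith [sq_nonneg (1 - 2*ε)]
    calc x * y = ((1 - ε) * ε) ^ (q/2) := hmul
      _ ≤ ((1:ℝ)/4) ^ (q/2) :=
          Real.rpow_le_rpow (by positivity) hle (by linarith)
      _ = (2:ℝ) ^ (-q) := aux_pow_half q hq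
  have hD0 : (0:ℝ) < 1 + (x * x) / (y * y) := by positivity
  have hD : (0:ℝ) < (1 + γ) ^ q + (x * x) / (y * y) := by
    have := Real.rpow_pos_of_pos (show (0:ℝ) < 1 + γ by linarith) q
    positivity
  have step1 : (1 - ε) ^ q * ((1 + γ) ^ q + ((1 - ε) / ε) ^ q)⁻¹
      ≤ (x * x) * (1 + (x * x) / (y * y))⁻¹ := by
    rw [hxx, hdiv]
    have hinv : ((1 + γ) ^ q + (x * x) / (y * y))⁻¹ ≤ (1 + (x * x) / (y * y))⁻¹ := by
      apply inv_anti₀ hD0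
      have : (0:ℝ) ≤ (x * x) / (y * y) := by positivity
      linarith
    exact mul_le_mul_of_nonneg_left hinv (by positivity)
  have step2 : (x * x) * (1 + (x * x) / (y * y))⁻¹ ≤ (2:ℝ) ^ (-p) := by
    have hform : (1 + (x * x) / (y * y)) = (y * y + x * x) / (y * y) := by
      field_simp
    have hsum : (0:ℝ) < y * y + x * x := by positivity
    rw [hform, inv_div]
    have key : (x * x) * ((y * y) / (y * y + x * x)) ≤ x * y / 2 := by
      rw [mul_div_assoc' , div_le_div_iff₀ hsum (by norm_num)]
      nlinarith [sq_nonneg (x - y), mul_pos hx hy]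
    have h2p : (2:ℝ) ^ (-p) = (2:ℝ) ^ (-q) / 2 := by
      rw [show -p = -q + (-1) by rw [hqdef]; ring, Real.rpow_add (by norm_num),
        Real.rpow_neg_one]
      ring
    calc (x * x) * ((y * y) / (y * y + x * x)) ≤ x * y / 2 := key
      _ ≤ (2:ℝ) ^ (-q) / 2 := by linarith
      _ = (2:ℝ) ^ (-p) := h2p.symm
  exact step1.trans step2

theorem optimal_tangential_cone_bound (p c : ℝ) (hp : 1 ≤ p)
    (hc : c ∈ Set.Ioo (0 : ℝ) (1/3)) :
    IsLUB {z : ℝ | ∃ ε ∈ Set.Ioo (0 : ℝ) 1, ∃ γ ∈ Set.Ioo (0 : ℝ) 1,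
        z = (1 - ε) ^ (p - 1) *
          ((1 + γ) ^ (p - 1) + ((1 - ε) / ε) ^ (p - 1))⁻¹} ((2 : ℝ) ^ (-p)) ∧
    (c / (1 - c)) ^ p < (2 : ℝ) ^ (-p) ∧
    (∀ c' : ℝ, 0 < c' → c' < 1 →
      ((c' / (1 - c')) ^ p < (2 : ℝ) ^ (-p) ↔ c' < 1/3)) := by
  obtain ⟨hc0, hc13⟩ := hc
  have hq : (0:ℝ) ≤ p - 1 := by linarith
  have hppos : (0:ℝ) < p := by linarith
  -- Part 3 first, as a local fact
  have part3 : ∀ c' : ℝ, 0 < c' → c' < 1 →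
      ((c' / (1 - c')) ^ p < (2 : ℝ) ^ (-p) ↔ c' < 1/3) := by
    intro c' h0 h1
    have h1c : (0:ℝ) < 1 - c' := by linarith
    have hbase : (0:ℝ) ≤ c' / (1 - c') := by positivity
    have h2p : (2:ℝ) ^ (-p) = ((1:ℝ)/2) ^ p := by
      rw [Real.rpow_neg (by norm_num), ← Real.inv_rpow (by norm_num)]
      norm_num
    rw [h2p, Real.rpow_lt_rpow_iff hbase (by norm_num) hppos, div_lt_iff₀ h1c]
    constructor <;> intro h <;> linarith
  refine ⟨⟨?_, ?_⟩, (part3 c hc0 (by linarith)).mpr hc13, part3⟩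
  · -- upper bound
    rintro z ⟨ε, ⟨hε0, hε1⟩, γ, ⟨hγ0, hγ1⟩, rfl⟩
    exact aux_ub p hp ε γ hε0 hε1 hγ0.le
  · -- least upper bound
    intro u hu
    set g : ℝ → ℝ := fun γ => ((1:ℝ)/2) ^ (p - 1) * ((1 + γ) ^ (p - 1) + 1)⁻¹ with hgdef
    have hcont : ContinuousAt (fun γ : ℝ => (1 + γ) ^ (p - 1)) 0 := by
      apply ContinuousAt.rpow_const (by fun_prop)
      exact Or.inl (by norm_num)
    have hden : ((1 + (0:ℝ)) ^ (p - 1) + 1) ≠ 0 := by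
      simp [Real.one_rpow]
    have hgcont : ContinuousAt g 0 := by
      exact ((hcont.add continuousAt_const).inv₀ hden).const_mul _
    have hg0 : g 0 = (2:ℝ) ^ (-p) := by
      have : ((1:ℝ)/2) ^ (p - 1) = (2:ℝ) ^ (-(p-1)) := by
        rw [Real.rpow_neg (by norm_num), ← Real.inv_rpow (by norm_num)]
        norm_num
      simp only [hgdef, add_zero, Real.one_rpow, this]
      rw [show -p = -(p-1) + (-1) by ring, Real.rpow_add (by norm_num),
        Real.rpow_neg_one]
      norm_num
    have htend : Tendsto g (nhdsWithin 0 (Set.Ioi (0:ℝ))) (nhds ((2:ℝ) ^ (-p))) := by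
      rw [← hg0]
      exact hgcont.tendsto.mono_left nhdsWithin_le_nhds
    have hev : ∀ᶠ γ in nhdsWithin 0 (Set.Ioi (0:ℝ)), g γ ≤ u := by
      filter_upwards [self_mem_nhdsWithin,
        nhdsWithin_le_nhds (Iio_mem_nhds (by norm_num : (0:ℝ) < 1))] with γ h0 h1
      apply hu
      refine ⟨1/2, by norm_num, γ, ⟨h0, h1⟩, ?_⟩
      norm_num [hgdef]
    exact le_of_tendsto htend hev
end
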